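/- Let N ≥ 1 and let m ≥ 2 be an integer. Let r₁, r₂ be real numbers with 0 < r₁ ≤ 1 ≤ r₂, and let K : ℝ^N × (0,∞) → ℝ be a continuous, everywhere strictly positive function, ℤ^N-periodic in the first variable, satisfying K(x, ρ) > ρ^{1−m} whenever ρ < r₁ and K(x, ρ) < ρ^{1−m} whenever ρ > r₂. Then every C², ℤ^N-periodic function u : ℝ^N → ℝ satisfying det A[u](x) = e^{(m−1)u(x)} · K(x, e^{u(x)}) · (1 + ‖∇u(x)‖²)^{(m+1)/2} for all x obeys log r₁ ≤ u(x) ≤ log r₂ for all x. -/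

import Mathlib

open Matrix Real

/-- The `i`-th partial derivative (gradient component) of `u` at `x`. -/
noncomputable def grad {N : ℕ} (u : (Fin N → ℝ) → ℝ) (x : Fin N → ℝ) (i : Fin N) : ℝ :=
  fderiv ℝ u x (Pi.single i 1)

/-- The `(i,j)` entry of the Hessian matrix of `u` at `x`. -/
noncomputable def hess {N : ℕ} (u : (Fin N → ℝ) → ℝ) (x : Fin N → ℝ) (i j : Fin N) : ℝ :=
  fderiv ℝ (fun y => fderiv ℝ u y (Pi.single j 1)) x (Pi.single i 1)

/-- The squared norm of the gradient of `u` at `x`. -/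
noncomputable def gradSq {N : ℕ} (u : (Fin N → ℝ) → ℝ) (x : Fin N → ℝ) : ℝ :=
  ∑ i, (grad u x i) ^ 2

/-- The Laplacian of `u` at `x` (trace of the Hessian). -/
noncomputable def lap {N : ℕ} (u : (Fin N → ℝ) → ℝ) (x : Fin N → ℝ) : ℝ :=
  ∑ i, hess u x i i

/-- The matrix `A[u](x) = I + ∇u(x) (∇u(x))ᵀ − Hess u(x)`. -/
noncomputable def amat {N : ℕ} (u : (Fin N → ℝ) → ℝ) (x : Fin N → ℝ) :
    Matrix (Fin N) (Fin N) ℝ :=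
  1 + Matrix.of (fun i j => grad u x i * grad u x j) - Matrix.of (fun i j => hess u x i j)

/-- `u` is `ℤ^N`-periodic. -/
def ZPeriodic {N : ℕ} (u : (Fin N → ℝ) → ℝ) : Prop :=
  ∀ (x : Fin N → ℝ) (k : Fin N → ℤ), u (x + fun i => (k i : ℝ)) = u x

/-- `u` is admissible: `A[u](x)` is positive definite for every `x`. -/
def Admissible {N : ℕ} (u : (Fin N → ℝ) → ℝ) : Prop :=
  ∀ x, (amat u x).PosDef

/-!
At a maximum point `x₁` of `u` the gradient vanishes and the Hessian is negative semidefinite,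
so `A[u](x₁) ≥ I` and `det A[u](x₁) ≥ 1`; at a minimum point `x₀` likewise `A[u](x₀) ≤ I`.
The right-hand side of the equation is positive, so `det A[u]` never vanishes, and a continuous
family of symmetric matrices on a connected space with nonvanishing determinant that is positive
definite at one point is positive definite everywhere. Hence `0 < A[u](x₀) ≤ I` and
`det A[u](x₀) ≤ 1`. Since `∇u = 0` at both points, the equation there says
`e^{(m-1)u} K(x, e^u) ≥ 1` at `x₁` and `≤ 1` at `x₀`, which the barrier conditions turn into
`e^{u(x₁)} ≤ r₂` and `r₁ ≤ e^{u(x₀)}`.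
-/

open Filter Topology

theorem IsLocalMax.deriv_deriv_nonpos {f : ℝ → ℝ} {a : ℝ} (h : IsLocalMax f a)
    (hc : ContinuousAt f a) : deriv (deriv f) a ≤ 0 := by
  by_contra! hpos
  -- by the second derivative test `a` is also a local minimum, so `f` is constant near `a`
  have hmin : IsLocalMin f a := isLocalMin_of_deriv_deriv_pos hpos h.deriv_eq_zero hc
  have hconst : f =ᶠ[𝓝 a] fun _ => f a := by
    filter_upwards [h, hmin] with x hx₁ hx₂ using le_antisymm hx₁ hx₂
  have hderiv : deriv f =ᶠ[𝓝 a] fun _ => 0 := by simpa using hconst.deriv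
  simp [hderiv.deriv_eq] at hpos

theorem IsLocalMin.deriv_deriv_nonneg {f : ℝ → ℝ} {a : ℝ} (h : IsLocalMin f a)
    (hc : ContinuousAt f a) : 0 ≤ deriv (deriv f) a := by
  simpa [deriv.neg'] using h.neg.deriv_deriv_nonpos hc.neg

section SecondDerivative

variable {E : Type*} [NormedAddCommGroup E] [NormedSpace ℝ E] {u : E → ℝ}

lemma hasDerivAt_add_smul (x v : E) (t : ℝ) : HasDerivAt (fun s : ℝ => x + s • v) v t := by
  simpa using ((hasDerivAt_id t).smul_const v).const_add x

lemma deriv_comp_add_smul (hu : ContDiff ℝ 2 u) (x v : E) :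
    deriv (fun t : ℝ => u (x + t • v)) = fun t => fderiv ℝ u (x + t • v) v := by
  funext t
  exact ((hu.differentiable two_ne_zero).differentiableAt.hasFDerivAt.comp_hasDerivAt t
    (hasDerivAt_add_smul x v t)).deriv

lemma deriv_deriv_comp_add_smul (hu : ContDiff ℝ 2 u) (x v : E) :
    deriv (deriv fun t : ℝ => u (x + t • v)) 0 = fderiv ℝ (fderiv ℝ u) x v v := by
  have hDu : HasFDerivAt (fderiv ℝ u) (fderiv ℝ (fderiv ℝ u) x) (x + (0 : ℝ) • v) := by
    rw [zero_smul, add_zero]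
    exact ((hu.fderiv_right (m := 1) le_rfl).differentiable one_ne_zero).differentiableAt
      |>.hasFDerivAt
  have hline : HasDerivAt (fun t : ℝ => fderiv ℝ u (x + t • v)) (fderiv ℝ (fderiv ℝ u) x v) 0 :=
    hDu.comp_hasDerivAt (0 : ℝ) (hasDerivAt_add_smul x v 0)
  rw [deriv_comp_add_smul hu, (hline.clm_apply (hasDerivAt_const (0 : ℝ) v)).deriv]
  simp

lemma IsLocalMax.fderiv_fderiv_apply_self_nonpos {x : E} (h : IsLocalMax u x)
    (hu : ContDiff ℝ 2 u) (v : E) : fderiv ℝ (fderiv ℝ u) x v v ≤ 0 := by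
  rw [← deriv_deriv_comp_add_smul hu]
  have hmax : IsLocalMax (fun t : ℝ => u (x + t • v)) 0 :=
    IsLocalMax.comp_continuous (g := fun t : ℝ => x + t • v) (by simpa using h) (by fun_prop)
  exact hmax.deriv_deriv_nonpos (hu.continuous.comp (by fun_prop)).continuousAt

lemma IsLocalMin.fderiv_fderiv_apply_self_nonneg {x : E} (h : IsLocalMin u x)
    (hu : ContDiff ℝ 2 u) (v : E) : 0 ≤ fderiv ℝ (fderiv ℝ u) x v v := by
  rw [← deriv_deriv_comp_add_smul hu]
  have hmin : IsLocalMin (fun t : ℝ => u (x + t • v)) 0 :=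
    IsLocalMin.comp_continuous (g := fun t : ℝ => x + t • v) (by simpa using h) (by fun_prop)
  exact hmin.deriv_deriv_nonneg (hu.continuous.comp (by fun_prop)).continuousAt

end SecondDerivative

namespace Matrix

variable {n : Type*} [Fintype n]

section Eigenvalues

variable [DecidableEq n] {A : Matrix n n ℝ}

lemma IsHermitian.dotProduct_eigenvectorBasis_self (hA : A.IsHermitian) (i : n) :
    ⇑(hA.eigenvectorBasis i) ⬝ᵥ ⇑(hA.eigenvectorBasis i) = 1 := by
  have h := real_inner_self_eq_norm_sq (hA.eigenvectorBasis i)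
  rw [hA.eigenvectorBasis.orthonormal.1 i, EuclideanSpace.inner_eq_star_dotProduct] at h
  simpa using h

lemma IsHermitian.eigenvalues_eq_dotProduct (hA : A.IsHermitian) (i : n) :
    hA.eigenvalues i = ⇑(hA.eigenvectorBasis i) ⬝ᵥ (A *ᵥ ⇑(hA.eigenvectorBasis i)) := by
  simpa using hA.eigenvalues_eq i

lemma one_le_det_of_posSemidef_sub_one (h : (A - 1).PosSemidef) : 1 ≤ A.det := by
  have hA : A.IsHermitian := by simpa using h.isHermitian.add isHermitian_one
  have hev (i : n) : 1 ≤ hA.eigenvalues i := by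
    have := h.dotProduct_mulVec_nonneg (hA.eigenvectorBasis i)
    simp only [star_trivial, sub_mulVec, one_mulVec, dotProduct_sub,
      hA.dotProduct_eigenvectorBasis_self, ← hA.eigenvalues_eq_dotProduct] at this
    linarith
  rw [hA.det_eq_prod_eigenvalues]
  simpa using Finset.prod_le_prod (fun _ _ => zero_le_one) (fun i _ => hev i)

lemma det_le_one_of_posSemidef_one_sub (hA : A.PosDef) (h : (1 - A).PosSemidef) :
    A.det ≤ 1 := by
  have hev (i : n) : hA.isHermitian.eigenvalues i ≤ 1 := by
    have := h.dotProduct_mulVec_nonneg (hA.isHermitian.eigenvectorBasis i)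
    simp only [star_trivial, sub_mulVec, one_mulVec, dotProduct_sub,
      hA.isHermitian.dotProduct_eigenvectorBasis_self,
      ← hA.isHermitian.eigenvalues_eq_dotProduct] at this
    linarith
  rw [hA.isHermitian.det_eq_prod_eigenvalues]
  simpa using Finset.prod_le_one (fun i _ => (hA.eigenvalues_pos i).le) (fun i _ => hev i)

end Eigenvalues

/-- The sphere is that of the sup norm, so this is not the smallest eigenvalue of `M`, but it
has the same sign and is continuous in `M`. -/
noncomputable def sphereInf (M : Matrix n n ℝ) : ℝ :=
  sInf ((fun v => v ⬝ᵥ M *ᵥ v) '' Metric.sphere 0 1)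

lemma sphereInf_mul_norm_sq_le (M : Matrix n n ℝ) (v : n → ℝ) :
    M.sphereInf * ‖v‖ ^ 2 ≤ v ⬝ᵥ M *ᵥ v := by
  rcases eq_or_ne v 0 with rfl | hv
  · simp
  have hnorm : ‖v‖ ≠ 0 := norm_ne_zero_iff.mpr hv
  have hmem : ‖v‖⁻¹ • v ∈ Metric.sphere (0 : n → ℝ) 1 := by simp [norm_smul, hnorm]
  have hle : M.sphereInf ≤ (‖v‖⁻¹ • v) ⬝ᵥ M *ᵥ (‖v‖⁻¹ • v) :=
    csInf_le ((isCompact_sphere 0 1).image (by fun_prop)).bddBelow ⟨_, hmem, rfl⟩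
  rw [mulVec_smul, dotProduct_smul, smul_dotProduct, smul_eq_mul, smul_eq_mul, ← mul_assoc,
    ← sq, inv_pow, le_inv_mul_iff₀ (by positivity)] at hle
  linarith

lemma posDef_of_sphereInf_pos {M : Matrix n n ℝ} (hM : M.IsHermitian) (h : 0 < M.sphereInf) :
    M.PosDef :=
  .of_dotProduct_mulVec_pos hM fun v hv => by
    simpa using (mul_pos h (by positivity)).trans_le (M.sphereInf_mul_norm_sq_le v)

lemma posSemidef_of_sphereInf_nonneg {M : Matrix n n ℝ} (hM : M.IsHermitian)
    (h : 0 ≤ M.sphereInf) : M.PosSemidef :=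
  .of_dotProduct_mulVec_nonneg hM fun v => by
    simpa using (mul_nonneg h (by positivity)).trans (M.sphereInf_mul_norm_sq_le v)

lemma PosDef.sphereInf_pos [Nonempty n] {M : Matrix n n ℝ} (hM : M.PosDef) :
    0 < M.sphereInf := by
  have hne : (Metric.sphere (0 : n → ℝ) 1).Nonempty := NormedSpace.sphere_nonempty.mpr zero_le_one
  obtain ⟨v, hv, hmin⟩ := ((isCompact_sphere 0 1).image
    (f := fun v => v ⬝ᵥ M *ᵥ v) (by fun_prop)).sInf_mem (hne.image _)
  rw [sphereInf, ← hmin]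
  simpa using hM.dotProduct_mulVec_pos (x := v) (ne_zero_of_mem_sphere one_ne_zero ⟨v, hv⟩)

lemma continuous_sphereInf {X : Type*} [TopologicalSpace X] {A : X → Matrix n n ℝ}
    (hA : Continuous A) : Continuous fun x => (A x).sphereInf :=
  (isCompact_sphere 0 1).continuous_sInf (f := fun x v => v ⬝ᵥ A x *ᵥ v) (by fun_prop)

theorem posDef_of_continuous_of_det_ne_zero [DecidableEq n] {X : Type*} [TopologicalSpace X]
    [PreconnectedSpace X] {A : X → Matrix n n ℝ} (hA : Continuous A)
    (hherm : ∀ x, (A x).IsHermitian) (hdet : ∀ x, (A x).det ≠ 0) {x₀ : X} (h₀ : (A x₀).PosDef)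
    (x : X) : (A x).PosDef := by
  cases isEmpty_or_nonempty n
  · exact .of_dotProduct_mulVec_pos (hherm x) fun v hv => (hv (Subsingleton.elim v 0)).elim
  refine posDef_of_sphereInf_pos (hherm x) (not_le.mp fun hle => ?_)
  obtain ⟨y, hy⟩ :=
    intermediate_value_univ x x₀ (continuous_sphereInf hA) ⟨hle, h₀.sphereInf_pos.le⟩
  have hpsd := posSemidef_of_sphereInf_nonneg (hherm y) hy.ge
  exact (hpsd.posDef_iff_det_ne_zero.mpr (hdet y)).sphereInf_pos.ne' hy

end Matrix

section Hessian

variable {N : ℕ} {u : (Fin N → ℝ) → ℝ}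

lemma hess_eq_fderiv_fderiv (hu : ContDiff ℝ 2 u) (x : Fin N → ℝ) (i j : Fin N) :
    hess u x i j = fderiv ℝ (fderiv ℝ u) x (Pi.single i 1) (Pi.single j 1) := by
  have hDu : DifferentiableAt ℝ (fderiv ℝ u) x :=
    ((hu.fderiv_right (m := 1) le_rfl).differentiable one_ne_zero).differentiableAt
  rw [hess, fderiv_clm_apply hDu (differentiableAt_const _)]
  simp

lemma of_hess_eq_toMatrix₂' (hu : ContDiff ℝ 2 u) (x : Fin N → ℝ) :
    of (hess u x) = LinearMap.toMatrix₂' ℝ (fderiv ℝ (fderiv ℝ u) x).toLinearMap₁₂ := by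
  ext i j
  simp [LinearMap.toMatrix₂'_apply, hess_eq_fderiv_fderiv hu]

lemma dotProduct_hess_mulVec (hu : ContDiff ℝ 2 u) (x v : Fin N → ℝ) :
    v ⬝ᵥ of (hess u x) *ᵥ v = fderiv ℝ (fderiv ℝ u) x v v := by
  rw [← toLinearMap₂'_apply', of_hess_eq_toMatrix₂' hu, toLinearMap₂'_toMatrix']
  rfl

lemma isHermitian_hess (hu : ContDiff ℝ 2 u) (x : Fin N → ℝ) : (of (hess u x)).IsHermitian := by
  ext i j
  simp [hess_eq_fderiv_fderiv hu, (hu.contDiffAt.isSymmSndFDerivAt (by simp)).eq]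

lemma IsLocalMax.posSemidef_neg_hess {x : Fin N → ℝ} (h : IsLocalMax u x)
    (hu : ContDiff ℝ 2 u) : (-of (hess u x)).PosSemidef :=
  .of_dotProduct_mulVec_nonneg (isHermitian_hess hu x).neg fun v => by
    simpa only [star_trivial, neg_mulVec, dotProduct_neg, dotProduct_hess_mulVec hu, neg_nonneg]
      using h.fderiv_fderiv_apply_self_nonpos hu v

lemma IsLocalMin.posSemidef_hess {x : Fin N → ℝ} (h : IsLocalMin u x)
    (hu : ContDiff ℝ 2 u) : (of (hess u x)).PosSemidef :=
  .of_dotProduct_mulVec_nonneg (isHermitian_hess hu x) fun v => by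
    simpa [dotProduct_hess_mulVec hu] using h.fderiv_fderiv_apply_self_nonneg hu v

lemma isHermitian_amat (hu : ContDiff ℝ 2 u) (x : Fin N → ℝ) : (amat u x).IsHermitian := by
  refine (isHermitian_one.add ?_).sub (isHermitian_hess hu x)
  ext i j
  simp [mul_comm]

lemma continuous_amat (hu : ContDiff ℝ 2 u) : Continuous (amat u) := by
  have hDu : Continuous (fderiv ℝ u) := hu.continuous_fderiv two_ne_zero
  have hD2u : Continuous (fderiv ℝ (fderiv ℝ u)) :=
    (hu.fderiv_right (m := 1) le_rfl).continuous_fderiv one_ne_zero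
  refine continuous_matrix fun i j => ?_
  simp only [amat, grad, hess_eq_fderiv_fderiv hu, Matrix.sub_apply, Matrix.add_apply, of_apply]
  fun_prop

lemma amat_eq_one_sub_hess {x : Fin N → ℝ} (h : fderiv ℝ u x = 0) :
    amat u x = 1 - of (hess u x) := by
  ext i j
  simp [amat, grad, h]

lemma gradSq_eq_zero {x : Fin N → ℝ} (h : fderiv ℝ u x = 0) : gradSq u x = 0 := by
  simp [gradSq, grad, h]

end Hessian

namespace ZPeriodic

variable {N : ℕ} {u : (Fin N → ℝ) → ℝ}

lemma exists_mem_Icc_eq (hper : ZPeriodic u) (x : Fin N → ℝ) :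
    ∃ y ∈ Set.Icc (0 : Fin N → ℝ) 1, u y = u x := by
  refine ⟨fun i => Int.fract (x i),
    ⟨fun i => Int.fract_nonneg _, fun i => (Int.fract_lt_one _).le⟩, ?_⟩
  rw [← hper _ fun i => ⌊x i⌋]
  congr 1
  funext i
  simp

lemma isCompact_range (hper : ZPeriodic u) (hu : Continuous u) : IsCompact (Set.range u) := by
  convert isCompact_Icc.image hu
  ext t
  constructor
  · rintro ⟨x, rfl⟩
    exact hper.exists_mem_Icc_eq x
  · rintro ⟨y, -, rfl⟩
    exact ⟨y, rfl⟩

lemma exists_forall_ge (hper : ZPeriodic u) (hu : Continuous u) : ∃ x, ∀ y, u y ≤ u x := by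
  obtain ⟨_, ⟨x, rfl⟩, hx⟩ :=
    (hper.isCompact_range hu).exists_isGreatest (Set.range_nonempty u)
  exact ⟨x, fun y => hx ⟨y, rfl⟩⟩

lemma exists_forall_le (hper : ZPeriodic u) (hu : Continuous u) : ∃ x, ∀ y, u x ≤ u y := by
  obtain ⟨_, ⟨x, rfl⟩, hx⟩ := (hper.isCompact_range hu).exists_isLeast (Set.range_nonempty u)
  exact ⟨x, fun y => hx ⟨y, rfl⟩⟩

end ZPeriodic

lemma exp_mul_exp_zpow_one_sub (m : ℕ) (t : ℝ) :
    exp ((m - 1) * t) * exp t ^ ((1 : ℤ) - m) = 1 := by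
  rw [← rpow_intCast, ← exp_mul, ← exp_add]
  push_cast
  ring_nf
  exact exp_zero

section Barrier

variable {m : ℕ} {r t : ℝ} {k : ℝ → ℝ}

lemma le_log_of_barrier_above (hr : 0 < r) (hk : ∀ ρ, r < ρ → k ρ < ρ ^ ((1 : ℤ) - m))
    (h : 1 ≤ exp ((m - 1) * t) * k (exp t)) : t ≤ log r := by
  by_contra! hlt
  have hρ : r < exp t := by rwa [← exp_lt_exp, exp_log hr] at hlt
  have := mul_lt_mul_of_pos_left (hk _ hρ) (exp_pos ((m - 1) * t))
  rw [exp_mul_exp_zpow_one_sub] at this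
  linarith

lemma log_le_of_barrier_below (hr : 0 < r)
    (hk : ∀ ρ, 0 < ρ → ρ < r → ρ ^ ((1 : ℤ) - m) < k ρ)
    (h : exp ((m - 1) * t) * k (exp t) ≤ 1) : log r ≤ t := by
  by_contra! hlt
  have hρ : exp t < r := by rwa [← exp_lt_exp, exp_log hr] at hlt
  have := mul_lt_mul_of_pos_left (hk _ (exp_pos t) hρ) (exp_pos ((m - 1) * t))
  rw [exp_mul_exp_zpow_one_sub] at this
  linarith

end Barrier

theorem stmt9_general {N : ℕ} (m : ℕ)
    (r₁ r₂ : ℝ) (hr₁pos : 0 < r₁) (hr₂ : 1 ≤ r₂)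
    (K : (Fin N → ℝ) → ℝ → ℝ)
    (hKpos : ∀ x ρ, 0 < ρ → 0 < K x ρ)
    (hbar₁ : ∀ x ρ, 0 < ρ → ρ < r₁ → ρ ^ ((1 : ℤ) - (m : ℤ)) < K x ρ)
    (hbar₂ : ∀ x ρ, r₂ < ρ → K x ρ < ρ ^ ((1 : ℤ) - (m : ℤ)))
    (u : (Fin N → ℝ) → ℝ) (hu : ContDiff ℝ 2 u) (hper : ZPeriodic u)
    (heq : ∀ x, (amat u x).det =
      Real.exp (((m : ℝ) - 1) * u x) * K x (Real.exp (u x)) *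
        (1 + gradSq u x) ^ (((m : ℝ) + 1) / 2)) :
    ∀ x, Real.log r₁ ≤ u x ∧ u x ≤ Real.log r₂ := by
  have hdet_pos (x) : 0 < (amat u x).det := by
    have hK := hKpos x _ (exp_pos (u x))
    have hgrad : 0 ≤ gradSq u x := Finset.sum_nonneg fun i _ => sq_nonneg _
    rw [heq x]
    positivity
  have hdet_crit {x} (h : fderiv ℝ u x = 0) :
      (amat u x).det = exp ((m - 1) * u x) * K x (exp (u x)) := by
    simp [heq x, gradSq_eq_zero h]
  obtain ⟨x₁, hx₁⟩ := hper.exists_forall_ge hu.continuous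
  obtain ⟨x₀, hx₀⟩ := hper.exists_forall_le hu.continuous
  have hmax : IsLocalMax u x₁ := .of_forall hx₁
  have hmin : IsLocalMin u x₀ := .of_forall hx₀
  have hA₁ : (amat u x₁ - 1).PosSemidef := by
    simpa [amat_eq_one_sub_hess hmax.fderiv_eq_zero] using hmax.posSemidef_neg_hess hu
  have hA₀ : (1 - amat u x₀).PosSemidef := by
    simpa [amat_eq_one_sub_hess hmin.fderiv_eq_zero] using hmin.posSemidef_hess hu
  have hpd₁ : (amat u x₁).PosDef := by simpa using PosDef.one.add_posSemidef hA₁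
  have hpd₀ : (amat u x₀).PosDef := posDef_of_continuous_of_det_ne_zero (continuous_amat hu)
    (isHermitian_amat hu) (fun x => (hdet_pos x).ne') hpd₁ x₀
  have hdet₁ := one_le_det_of_posSemidef_sub_one hA₁
  have hdet₀ := det_le_one_of_posSemidef_one_sub hpd₀ hA₀
  rw [hdet_crit hmax.fderiv_eq_zero] at hdet₁
  rw [hdet_crit hmin.fderiv_eq_zero] at hdet₀
  intro x
  exact ⟨(log_le_of_barrier_below hr₁pos (hbar₁ x₀) hdet₀).trans (hx₀ x),
    (hx₁ x).trans (le_log_of_barrier_above (by linarith) (hbar₂ x₁) hdet₁)⟩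

/-- C⁰ a priori estimate under the barrier conditions (1.2): any periodic solution of
`det A[u] = e^{(m−1)u} K(x, e^u) (1 + ‖∇u‖²)^{(m+1)/2}` satisfies
`log r₁ ≤ u ≤ log r₂`. -/
theorem stmt9 {N : ℕ} (hN : 1 ≤ N) (m : ℕ) (hm : 2 ≤ m)
    (r₁ r₂ : ℝ) (hr₁pos : 0 < r₁) (hr₁ : r₁ ≤ 1) (hr₂ : 1 ≤ r₂)
    (K : (Fin N → ℝ) → ℝ → ℝ)
    (hKcont : ContinuousOn (fun q : (Fin N → ℝ) × ℝ => K q.1 q.2)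
      (Set.univ ×ˢ Set.Ioi (0 : ℝ)))
    (hKpos : ∀ x ρ, 0 < ρ → 0 < K x ρ)
    (hKper : ∀ (x : Fin N → ℝ) (k : Fin N → ℤ) (ρ : ℝ),
      K (x + fun i => (k i : ℝ)) ρ = K x ρ)
    (hbar₁ : ∀ x ρ, 0 < ρ → ρ < r₁ → ρ ^ ((1 : ℤ) - (m : ℤ)) < K x ρ)
    (hbar₂ : ∀ x ρ, r₂ < ρ → K x ρ < ρ ^ ((1 : ℤ) - (m : ℤ)))
    (u : (Fin N → ℝ) → ℝ) (hu : ContDiff ℝ 2 u) (hper : ZPeriodic u)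
    (heq : ∀ x, (amat u x).det =
      Real.exp (((m : ℝ) - 1) * u x) * K x (Real.exp (u x)) *
        (1 + gradSq u x) ^ (((m : ℝ) + 1) / 2)) :
    ∀ x, Real.log r₁ ≤ u x ∧ u x ≤ Real.log r₂ :=
  stmt9_general m r₁ r₂ hr₁pos hr₂ K hKpos hbar₁ hbar₂ u hu hper heq
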